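/- arXiv:1210.2026 — 3 statements merged into one kernel-verified Lean document; each statement's English description precedes it below -/
import Mathlib

section
/- If I ⊆ S = K[x_1,…,x_n] is a monomial ideal generated by monomials x^b with b ≤ t componentwise, then for any a ∈ ℕ^n, the monomial x^a lies in the radical √I if and only if x^{r(a)} lies in I, where r(a) is the vector with r(a)_i = t_i if a_i > 0 and r(a)_i = 0 otherwise. -/
open MvPolynomial

/-- The monomial `x^a` in `K[x_1,…,x_n]`. -/
noncomputable def mono (K : Type) [Field K] {n : ℕ} (a : Fin n → ℕ) : MvPolynomial (Fin n) K :=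
  monomial (Finsupp.equivFunOnFinite.symm a) 1

/-- The map `r : ℕ^n → ℕ^n`, `r(a)_i = t_i` if `a_i > 0` and `0` otherwise. -/
def rmap {n : ℕ} (t a : Fin n → ℕ) : Fin n → ℕ := fun i => if 0 < a i then t i else 0

lemma mono_mem_span_iff (K : Type) [Field K] {n : ℕ} (A : Set (Fin n → ℕ))
    (c : Fin n → ℕ) :
    mono K c ∈ Ideal.span ((fun b => mono K b) '' A) ↔ ∃ b ∈ A, ∀ i, b i ≤ c i := by
  have himg : (fun b => mono K b) '' A =
      (fun s => monomial s (1 : K)) '' (Finsupp.equivFunOnFinite.symm '' A) := by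
    rw [Set.image_image]; rfl
  rw [himg, mem_ideal_span_monomial_image]
  have hsupp : (mono K c).support = {Finsupp.equivFunOnFinite.symm c} := by
    classical rw [mono, support_monomial, if_neg (one_ne_zero)]
  rw [hsupp]
  constructor
  · intro h
    obtain ⟨si, hsi, hle⟩ := h _ (Finset.mem_singleton_self _)
    obtain ⟨b, hbA, rfl⟩ := hsi
    exact ⟨b, hbA, fun i => hle i⟩
  · rintro ⟨b, hbA, hle⟩ xi hxi
    rw [Finset.mem_singleton] at hxi
    subst hxi
    exact ⟨_, ⟨b, hbA, rfl⟩, fun i => hle i⟩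

lemma mono_pow (K : Type) [Field K] {n : ℕ} (a : Fin n → ℕ) (m : ℕ) :
    mono K a ^ m = mono K (fun i => m * a i) := by
  have h : Finsupp.equivFunOnFinite.symm (fun i => m * a i)
      = m • Finsupp.equivFunOnFinite.symm a := by
    ext i; simp
  simp [mono, monomial_pow, h]

/-- If `I ⊆ K[x_1,…,x_n]` is a monomial ideal generated by monomials `x^b` with `b ≤ t`
componentwise, then for any `a ∈ ℕ^n`, `x^a ∈ √I` iff `x^{r(a)} ∈ I`. -/
theorem monomial_mem_radical_iff (K : Type) [Field K] (n : ℕ) (t : Fin n → ℕ)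
    (ht : ∀ i, 1 ≤ t i) (I : Ideal (MvPolynomial (Fin n) K)) (A : Set (Fin n → ℕ))
    (hA : ∀ b ∈ A, b ≤ t) (hI : I = Ideal.span ((fun b => mono K b) '' A))
    (a : Fin n → ℕ) :
    mono K a ∈ I.radical ↔ mono K (rmap t a) ∈ I := by
  subst hI
  constructor
  · rintro ⟨m, hm⟩
    rw [mono_pow, mono_mem_span_iff] at hm
    obtain ⟨b, hbA, hle⟩ := hm
    rw [mono_mem_span_iff]
    refine ⟨b, hbA, fun i => ?_⟩
    unfold rmap
    by_cases h : 0 < a i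
    · rw [if_pos h]
      exact hA b hbA i
    · rw [if_neg h]
      have h0 : a i = 0 := by omega
      have := hle i
      rw [h0] at this
      omega
  · intro h
    rw [mono_mem_span_iff] at h
    obtain ⟨b, hbA, hle⟩ := h
    set m := Finset.univ.sup t with hm
    refine ⟨m, ?_⟩
    rw [mono_pow, mono_mem_span_iff]
    refine ⟨b, hbA, fun i => ?_⟩
    have htm : t i ≤ m := Finset.le_sup (Finset.mem_univ i)
    have := hle i
    unfold rmap at this
    by_cases h : 0 < a i
    · rw [if_pos h] at this
      calc b i ≤ t i := this
        _ ≤ m := htm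
        _ ≤ m * a i := Nat.le_mul_of_pos_right m h
    · rw [if_neg h] at this
      omega
end

section
/- If M is a positively t-determined ℕ^n-graded S-module, then r^*M is positively 1-determined (i.e., a squarefree S-module), where (r^*M)_a = M_{r(a)} and multiplication by x^b on (r^*M)_a is given by multiplication by x^{r(a+b)−r(a)} on M. -/
open MvPolynomial

def sqrtv {n : ℕ} (a : Fin n → ℕ) : Fin n → ℕ := fun i => if 0 < a i then 1 else 0

structure MultiGrading (K : Type) [Field K] (n : ℕ) (M : Type) [AddCommGroup M]
    [Module (MvPolynomial (Fin n) K) M] [Module K M]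
    [IsScalarTower K (MvPolynomial (Fin n) K) M] where
  g : (Fin n → ℕ) → Submodule K M
  internal : DirectSum.IsInternal g
  compat : ∀ a b : Fin n → ℕ, ∀ m ∈ g a, mono K b • m ∈ g (a + b)

variable {K : Type} [Field K] {n : ℕ}

def PosDetermined {M : Type} [AddCommGroup M] [Module (MvPolynomial (Fin n) K) M] [Module K M]
    [IsScalarTower K (MvPolynomial (Fin n) K) M] (G : MultiGrading K n M) (t : Fin n → ℕ) : Prop :=
  ∀ (a : Fin n → ℕ) (i : Fin n), t i ≤ a i →
    Set.BijOn (fun m => (X i : MvPolynomial (Fin n) K) • m) (G.g a : Set M) (G.g (a + Pi.single i 1) : Set M)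

def IsRStar {M N : Type} [AddCommGroup M] [Module (MvPolynomial (Fin n) K) M] [Module K M]
    [IsScalarTower K (MvPolynomial (Fin n) K) M]
    [AddCommGroup N] [Module (MvPolynomial (Fin n) K) N] [Module K N]
    [IsScalarTower K (MvPolynomial (Fin n) K) N]
    (t : Fin n → ℕ) (G : MultiGrading K n M) (H : MultiGrading K n N) : Prop :=
  ∃ e : (Fin n → ℕ) → (M →ₗ[K] N),
    (∀ a, Set.InjOn (e a) (G.g (rmap t a))) ∧
    (∀ a, e a '' (G.g (rmap t a)) = (H.g a : Set N)) ∧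
    (∀ a b : Fin n → ℕ, ∀ m ∈ G.g (rmap t a),
      e (a + b) (mono K (rmap t (a + b) - rmap t a) • m) = mono K b • e a m)

noncomputable def mdim (R : Type) [CommRing R] (M : Type) [AddCommGroup M] [Module R M] :
    WithBot ℕ∞ :=
  ringKrullDim (R ⧸ (⊤ : Submodule R M).annihilator)

noncomputable def mdepth (K : Type) [Field K] (n : ℕ) (M : Type) [AddCommGroup M] [Module (MvPolynomial (Fin n) K) M] : ℕ :=
  sSup {k : ℕ | ∃ rs : List (MvPolynomial (Fin n) K), rs.length = k ∧
    (∀ r ∈ rs, r ∈ Ideal.span (Set.range (X : Fin n → MvPolynomial (Fin n) K))) ∧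
    RingTheory.Sequence.IsRegular M rs}

noncomputable def IsCM (K : Type) [Field K] (n : ℕ) (M : Type) [AddCommGroup M] [Module (MvPolynomial (Fin n) K) M] : Prop :=
  (mdepth K n M : WithBot ℕ∞) = mdim (MvPolynomial (Fin n) K) M

/-- if `M` is positively `t`-determined then `r^*M` (here: any module `N` whose
grading realizes `r^*M`) is positively `1`-determined, i.e. squarefree. -/
theorem rstar_squarefree {M N : Type} [AddCommGroup M] [Module (MvPolynomial (Fin n) K) M]
    [Module K M] [IsScalarTower K (MvPolynomial (Fin n) K) M]
    [AddCommGroup N] [Module (MvPolynomial (Fin n) K) N] [Module K N]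
    [IsScalarTower K (MvPolynomial (Fin n) K) N]
    (t : Fin n → ℕ) (ht : ∀ i, 1 ≤ t i)
    (G : MultiGrading K n M) [Module.Finite (MvPolynomial (Fin n) K) M]
    (hM : PosDetermined G t)
    (H : MultiGrading K n N) (hN : IsRStar t G H) :
    PosDetermined H (fun _ => 1) := by
  obtain ⟨e, hinj, himg, hcompat⟩ := hN
  intro a i hai
  have hr : rmap t (a + Pi.single i 1) = rmap t a := by
    funext j
    simp only [rmap, Pi.add_apply]
    by_cases hj : j = i
    · have h1 : 0 < a i := hai
      simp [hj, h1]
    · simp [Pi.single_eq_of_ne hj]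
  have hmono0 : (mono K (rmap t (a + Pi.single i 1) - rmap t a)) = 1 := by
    rw [hr]
    have h0 : rmap t a - rmap t a = (0 : Fin n → ℕ) := by funext j; simp
    rw [h0]
    have : (Finsupp.equivFunOnFinite.symm (0 : Fin n → ℕ)) = 0 := by
      ext j; simp
    simp [mono, this]
  have hX : (X i : MvPolynomial (Fin n) K) = mono K (Pi.single i 1) := by
    have : (Finsupp.equivFunOnFinite.symm (Pi.single i 1 : Fin n → ℕ)) = Finsupp.single i 1 := by
      ext j
      by_cases hj : j = i
      · subst hj; simp
      · simp [Finsupp.single_eq_of_ne (Ne.symm hj), Pi.single_eq_of_ne hj]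
    rw [mono, this]
    rfl
  have key : ∀ m ∈ G.g (rmap t a), (X i : MvPolynomial (Fin n) K) • e a m
      = e (a + Pi.single i 1) m := by
    intro m hm
    have h := hcompat a (Pi.single i 1) m hm
    rw [hmono0, one_smul] at h
    rw [hX, h]
  constructor
  · -- MapsTo
    intro x hx
    rw [← himg a] at hx
    obtain ⟨m, hm, rfl⟩ := hx
    have : (X i : MvPolynomial (Fin n) K) • e a m = e (a + Pi.single i 1) m := key m hm
    show (X i : MvPolynomial (Fin n) K) • e a m ∈ (H.g (a + Pi.single i 1) : Set N)
    rw [this, ← himg (a + Pi.single i 1)]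
    exact ⟨m, by rw [hr]; exact hm, rfl⟩
  constructor
  · -- InjOn
    intro x hx y hy hxy
    rw [← himg a] at hx hy
    obtain ⟨m₁, hm₁, rfl⟩ := hx
    obtain ⟨m₂, hm₂, rfl⟩ := hy
    simp only at hxy
    rw [key m₁ hm₁, key m₂ hm₂] at hxy
    have hm₁' : m₁ ∈ (G.g (rmap t (a + Pi.single i 1)) : Set M) := by rw [hr]; exact hm₁
    have hm₂' : m₂ ∈ (G.g (rmap t (a + Pi.single i 1)) : Set M) := by rw [hr]; exact hm₂
    rw [hinj (a + Pi.single i 1) hm₁' hm₂' hxy]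
  · -- SurjOn
    intro y hy
    rw [← himg (a + Pi.single i 1)] at hy
    obtain ⟨m, hm, rfl⟩ := hy
    rw [hr] at hm
    refine ⟨e a m, ?_, ?_⟩
    · rw [← himg a]; exact ⟨m, hm, rfl⟩
    · exact key m hm
end

section
/- For a monomial ideal I ⊆ S that is positively t-determined, the map sending x^a ∈ √I to x^{r(a)} ∈ I (in degree a of r^*I) is an isomorphism of ℤ^n-graded S-modules; in particular r^*I ≅ √I. -/
open MvPolynomial

variable {K : Type} [Field K] {n : ℕ}

/-- The degree-`a` component of a monomial ideal `I`, as a `K`-subspace of `↥I`: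
the preimage of `K·x^a` under the inclusion `I ⊆ S`. -/
noncomputable def idealPiece (I : Ideal (MvPolynomial (Fin n) K)) (a : Fin n → ℕ) :
    Submodule K ↥I :=
  Submodule.comap ((Submodule.subtype (I : Submodule (MvPolynomial (Fin n) K)
    (MvPolynomial (Fin n) K))).restrictScalars K) (Submodule.span K {mono K a})

/-! The degree-`a` piece of `r^*I` is `I_{r(a)}`, which is `K · x^{r(a)}` or `0`, and since the
generators of `I` are bounded by `t`, `x^{r(a)} ∈ I` exactly when `x^a ∈ √I`. So `r^*I` and `√I`
have one-dimensional pieces in the same degrees, and `x^a ↦ (image of x^{r(a)})` extends to a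
`K`-linear bijection `√I → r^*I`; the compatibility of the multiplication maps makes it
`S`-linear. This needs `√I` to be a monomial ideal again: monomial ideals are the homogeneous
ideals for the `ℕⁿ`-grading, and radicals of homogeneous ideals are homogeneous. -/

lemma mono_coe (d : Fin n →₀ ℕ) : mono K ⇑d = monomial d 1 := by simp [mono]

lemma mono_ne_zero (a : Fin n → ℕ) : mono K a ≠ 0 := by
  simp [mono, monomial_eq_zero]

lemma mono_add (a b : Fin n → ℕ) : mono K (a + b) = mono K a * mono K b := by
  rw [mono, mono, mono, monomial_mul, one_mul]
  congr 2
  exact Finsupp.ext fun _ => by simp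

lemma mono_nsmul (k : ℕ) (a : Fin n → ℕ) : mono K (k • a) = mono K a ^ k := by
  rw [mono, mono, monomial_pow, one_pow]
  congr 2
  exact Finsupp.ext fun _ => by simp

lemma span_mono_image (A : Set (Fin n → ℕ)) : Ideal.span (mono K '' A) =
    Ideal.span ((fun d => monomial d 1) '' (Finsupp.equivFunOnFinite.symm '' A)) := by
  rw [Set.image_image]
  rfl

lemma mono_mem_span_mono_iff {A : Set (Fin n → ℕ)} {c : Fin n → ℕ} :
    mono K c ∈ Ideal.span (mono K '' A) ↔ ∃ b ∈ A, b ≤ c := by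
  classical
  rw [span_mono_image, mem_ideal_span_monomial_image, mono, support_monomial,
    if_neg one_ne_zero]
  simp only [Finset.mem_singleton, forall_eq, Set.exists_mem_image]
  rfl

section MonomialIdeal

variable {σ : Type*}

def IsMonomialIdeal (J : Ideal (MvPolynomial σ K)) : Prop :=
  ∀ p ∈ J, ∀ d ∈ p.support, monomial d 1 ∈ J

lemma IsMonomialIdeal.mem_span {J : Ideal (MvPolynomial σ K)} (hJ : IsMonomialIdeal J)
    {p : MvPolynomial σ K} (hp : p ∈ J) :
    p ∈ Submodule.span K ((fun d => monomial d 1) '' {d | monomial d 1 ∈ J}) := by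
  rw [← coe_basisMonomials, Module.Basis.mem_span_image]
  exact fun d hd => hJ p hp d hd

/-- Weighting `X i` by the `i`-th unit vector makes every weighted homogeneous component a single
term; the lexicographic order is there because `Ideal.IsHomogeneous.radical` needs a linearly
ordered grading monoid. -/
noncomputable def lexWeight [LinearOrder σ] (i : σ) : Lex (σ →₀ ℕ) :=
  toLex (Finsupp.single i 1)

lemma weight_lexWeight [LinearOrder σ] (d : σ →₀ ℕ) :
    Finsupp.weight lexWeight d = toLex d := by
  change (d.sum fun i c => c • Finsupp.single i 1 : σ →₀ ℕ) = d
  simp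

lemma weightedHomogeneousComponent_lexWeight [LinearOrder σ] [DecidableEq (Lex (σ →₀ ℕ))]
    (p : MvPolynomial σ K) (d : σ →₀ ℕ) :
    weightedHomogeneousComponent lexWeight (toLex d) p = monomial d (coeff d p) := by
  ext d'
  rw [coeff_weightedHomogeneousComponent, weight_lexWeight, coeff_monomial]
  split_ifs <;> simp_all

theorem isMonomialIdeal_radical_span_monomial (s : Set (σ →₀ ℕ)) :
    IsMonomialIdeal (Ideal.span ((fun d => monomial d (1 : K)) '' s)).radical := by
  let := IsWellOrder.linearOrder (WellOrderingRel (α := σ))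
  let : DecidableEq (Lex (σ →₀ ℕ)) := LinearOrder.toDecidableEq
  let := weightedGradedAlgebra K (lexWeight (σ := σ))
  have hspan : (Ideal.span ((fun d => monomial d (1 : K)) '' s)).IsHomogeneous
      (weightedHomogeneousSubmodule K lexWeight) := by
    refine Ideal.homogeneous_span _ _ ?_
    rintro _ ⟨d, -, rfl⟩
    exact ⟨_, isWeightedHomogeneous_monomial _ _ _ rfl⟩
  intro p hp d hd
  have hterm := weightedHomogeneousComponent_mem_of_mem K lexWeight hspan.radical hp (toLex d)
  rw [weightedHomogeneousComponent_lexWeight] at hterm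
  simpa [C_mul_monomial, inv_mul_cancel₀ (mem_support_iff.1 hd)] using
    Ideal.mul_mem_left _ (C (coeff d p)⁻¹) hterm

end MonomialIdeal

lemma isMonomialIdeal_radical_span_mono (A : Set (Fin n → ℕ)) :
    IsMonomialIdeal (Ideal.span (mono K '' A)).radical :=
  span_mono_image (K := K) A ▸ isMonomialIdeal_radical_span_monomial _

section IdealPiece

variable {M : Type} [AddCommGroup M] [Module K M] (J : Ideal (MvPolynomial (Fin n) K))

lemma mem_idealPiece_iff {a : Fin n → ℕ} {x : J} :
    x ∈ idealPiece J a ↔ ∃ c : K, c • mono K a = x :=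
  Submodule.mem_span_singleton

lemma idealPiece_eq_span_singleton {a : Fin n → ℕ} (h : mono K a ∈ J) :
    idealPiece J a = K ∙ (⟨mono K a, h⟩ : J) := by
  ext x
  rw [mem_idealPiece_iff, Submodule.mem_span_singleton]
  simp only [Subtype.ext_iff]
  rfl

lemma idealPiece_eq_bot {a : Fin n → ℕ} (h : mono K a ∉ J) : idealPiece J a = ⊥ := by
  refine (Submodule.eq_bot_iff _).2 fun x hx => ?_
  obtain ⟨c, hc⟩ := (mem_idealPiece_iff J).1 hx
  obtain rfl | hc0 := eq_or_ne c 0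
  · simpa [eq_comm] using hc
  · refine absurd ?_ h
    rw [← inv_smul_smul₀ hc0 (mono K a), hc]
    exact J.smul_of_tower_mem c⁻¹ x.2

open Classical in
noncomputable def monomialImage (f : J →ₗ[K] M) (a : Fin n → ℕ) : M :=
  if h : mono K a ∈ J then f ⟨mono K a, h⟩ else 0

lemma map_idealPiece (f : J →ₗ[K] M) (a : Fin n → ℕ) :
    (idealPiece J a).map f = K ∙ monomialImage J f a := by
  by_cases h : mono K a ∈ J
  · rw [idealPiece_eq_span_singleton J h, Submodule.map_span, Set.image_singleton, monomialImage,
      dif_pos h]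
  · rw [idealPiece_eq_bot J h, Submodule.map_bot, monomialImage, dif_neg h,
      Submodule.span_zero_singleton]

lemma monomialImage_eq_zero_iff {f : J →ₗ[K] M} {a : Fin n → ℕ}
    (hf : Set.InjOn f (idealPiece J a)) : monomialImage J f a = 0 ↔ mono K a ∉ J := by
  by_cases h : mono K a ∈ J
  · rw [monomialImage, dif_pos h]
    have hmem : (⟨mono K a, h⟩ : J) ∈ idealPiece J a := by
      rw [idealPiece_eq_span_singleton J h]
      exact Submodule.mem_span_singleton_self _
    refine iff_of_false (fun h0 => mono_ne_zero (K := K) a ?_) (not_not_intro h)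
    exact congrArg Subtype.val (hf hmem (zero_mem _) (h0.trans (map_zero f).symm))
  · simp [monomialImage, h]

end IdealPiece

section MonomialExtend

variable {M : Type} [AddCommGroup M] [Module K M]

noncomputable def monomialExtend (v : (Fin n → ℕ) → M) : MvPolynomial (Fin n) K →ₗ[K] M :=
  (basisMonomials (Fin n) K).constr K fun d => v ⇑d

lemma monomialExtend_monomial (v : (Fin n → ℕ) → M) (d : Fin n →₀ ℕ) :
    monomialExtend v (monomial d (1 : K)) = v d :=
  (basisMonomials (Fin n) K).constr_basis K _ d

lemma monomialExtend_mono (v : (Fin n → ℕ) → M) (a : Fin n → ℕ) :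
    monomialExtend v (mono K a) = v a :=
  monomialExtend_monomial v _

lemma monomialExtend_eq_zero {J : Ideal (MvPolynomial (Fin n) K)} (hJ : IsMonomialIdeal J)
    {H : (Fin n → ℕ) → Submodule K M} (hH : iSupIndep H) {v : (Fin n → ℕ) → M}
    (hvH : ∀ a, v a ∈ H a) (hv : ∀ a, mono K a ∈ J → v a ≠ 0)
    {p : MvPolynomial (Fin n) K} (hp : p ∈ J) (hp0 : monomialExtend v p = 0) : p = 0 := by
  have hindep : LinearIndepOn K (fun d : Fin n →₀ ℕ => v ⇑d) {d | monomial d 1 ∈ J} :=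
    hH.comp (DFunLike.coe_injective.comp Subtype.val_injective) |>.linearIndependent _
      (fun d => hvH _) fun d => hv _ (by rw [mono_coe]; exact d.2)
  have hrepr := linearIndepOn_iff.1 hindep ((basisMonomials (Fin n) K).repr p)
    (fun d hd => hJ p hp d hd)
    (by rwa [monomialExtend, Module.Basis.constr_apply, ← Finsupp.linearCombination_apply] at hp0)
  simpa using hrepr

variable [Module (MvPolynomial (Fin n) K) M] [IsScalarTower K (MvPolynomial (Fin n) K) M]

lemma monomialExtend_mul {J : Ideal (MvPolynomial (Fin n) K)} (hJ : IsMonomialIdeal J)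
    {v : (Fin n → ℕ) → M} (hmul : ∀ a b, mono K a ∈ J → v (a + b) = mono K b • v a)
    {p : MvPolynomial (Fin n) K} (hp : p ∈ J) (q : MvPolynomial (Fin n) K) :
    monomialExtend v (q * p) = q • monomialExtend v p := by
  have hmonomial : ∀ d, monomial d 1 ∈ J →
      (monomialExtend v).comp (LinearMap.mulRight K (monomial d 1)) =
        (LinearMap.toSpanSingleton _ M (v d)).restrictScalars K := by
    intro d hd
    refine (basisMonomials (Fin n) K).ext fun u => ?_
    simp only [coe_basisMonomials, LinearMap.coe_comp, Function.comp_apply,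
      LinearMap.mulRight_apply, monomial_mul, mul_one, LinearMap.coe_restrictScalars,
      LinearMap.toSpanSingleton_apply, monomialExtend_monomial]
    rw [← mono_coe u, ← hmul _ _ (by rwa [mono_coe]), ← Finsupp.coe_add, add_comm]
  have hspan := hJ.mem_span hp
  clear hp
  induction hspan using Submodule.span_induction with
  | mem _ hx =>
    obtain ⟨d, hd, rfl⟩ := hx
    simpa [monomialExtend_monomial] using LinearMap.congr_fun (hmonomial d hd) q
  | zero => simp
  | add x y _ _ hx hy => rw [mul_add, map_add, map_add, hx, hy, smul_add]
  | smul c x _ hx => rw [mul_smul_comm, map_smul, map_smul, hx, smul_comm]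

theorem exists_linearEquiv_idealPiece {J : Ideal (MvPolynomial (Fin n) K)}
    (hJ : IsMonomialIdeal J) {H : (Fin n → ℕ) → Submodule K M} (hH : DirectSum.IsInternal H)
    {v : (Fin n → ℕ) → M} (hHv : ∀ a, H a = K ∙ v a)
    (hv : ∀ a, v a = 0 ↔ mono K a ∉ J)
    (hmul : ∀ a b, mono K a ∈ J → v (a + b) = mono K b • v a) :
    ∃ e : M ≃ₗ[MvPolynomial (Fin n) K] J,
      ∀ a, Submodule.map (e.toLinearMap.restrictScalars K) (H a) = idealPiece J a := by
  let ψ : J →ₗ[MvPolynomial (Fin n) K] M :=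
    { toFun := fun p => monomialExtend v p.1
      map_add' := fun p q => map_add _ _ _
      map_smul' := fun q p => by
        rw [Submodule.coe_smul, smul_eq_mul, RingHom.id_apply]
        exact monomialExtend_mul hJ hmul p.2 q }
  have hmap : ∀ a, (idealPiece J a).map (ψ.restrictScalars K) = H a := by
    intro a
    have hgen : monomialImage J (ψ.restrictScalars K) a = v a := by
      by_cases h : mono K a ∈ J
      · rw [monomialImage, dif_pos h]
        exact monomialExtend_mono v a
      · rw [monomialImage, dif_neg h, (hv a).2 h]
    rw [map_idealPiece, hgen, hHv]
  have hinj : Function.Injective ψ := by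
    refine (injective_iff_map_eq_zero ψ).2 fun p hp => Subtype.ext ?_
    refine monomialExtend_eq_zero hJ hH.submodule_iSupIndep (fun a => ?_) (fun a h => ?_) p.2 hp
    · exact hHv a ▸ Submodule.mem_span_singleton_self _
    · exact fun h0 => (hv a).1 h0 h
  have hsurj : Function.Surjective ψ := by
    rw [← LinearMap.range_eq_top, ← Submodule.restrictScalars_eq_top_iff K, eq_top_iff,
      ← hH.submodule_iSup_eq_top, iSup_le_iff]
    exact fun a => hmap a ▸ LinearMap.map_le_range
  let e := LinearEquiv.ofBijective ψ ⟨hinj, hsurj⟩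
  refine ⟨e.symm, fun a => ?_⟩
  change Submodule.map ((e.restrictScalars K).symm : M →ₗ[K] J) (H a) = _
  exact Submodule.map_symm_eq_iff _ |>.2 (hmap a)

end MonomialExtend

section Rmap

variable {t : Fin n → ℕ}

lemma rmap_mono : Monotone (rmap t) := by
  intro a a' h i
  have hi : a i ≤ a' i := h i
  simp only [rmap]
  split_ifs <;> omega

lemma rmap_le_nsmul (a : Fin n → ℕ) : rmap t a ≤ Finset.univ.sup t • a := by
  intro i
  have hti : t i ≤ Finset.univ.sup t := Finset.le_sup (Finset.mem_univ i)
  simp only [rmap, Pi.smul_apply, smul_eq_mul]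
  split_ifs with h
  · exact hti.trans (Nat.le_mul_of_pos_right _ h)
  · exact Nat.zero_le _

lemma le_rmap_of_le_nsmul {a b : Fin n → ℕ} {k : ℕ} (hbt : b ≤ t) (hb : b ≤ k • a) :
    b ≤ rmap t a := by
  intro i
  have hbi := hb i
  simp only [rmap, Pi.smul_apply, smul_eq_mul] at hbi ⊢
  split_ifs with h
  · exact hbt i
  · simp_all

lemma mono_rmap_mem_iff {A : Set (Fin n → ℕ)} (hA : ∀ b ∈ A, b ≤ t) (a : Fin n → ℕ) :
    mono K (rmap t a) ∈ Ideal.span (mono K '' A) ↔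
      mono K a ∈ (Ideal.span (mono K '' A)).radical := by
  simp only [Ideal.mem_radical_iff, ← mono_nsmul, mono_mem_span_mono_iff]
  constructor
  · rintro ⟨b, hb, hle⟩
    exact ⟨_, b, hb, hle.trans (rmap_le_nsmul a)⟩
  · rintro ⟨k, b, hb, hle⟩
    exact ⟨b, hb, le_rmap_of_le_nsmul (hA b hb) hle⟩

lemma mono_rmap_add (a b : Fin n → ℕ) :
    mono K (rmap t (a + b)) = mono K (rmap t (a + b) - rmap t a) * mono K (rmap t a) := by
  rw [← mono_add, tsub_add_cancel_of_le (rmap_mono le_self_add)]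

lemma monomialImage_rmap_add {N : Type} [AddCommGroup N] [Module (MvPolynomial (Fin n) K) N]
    [Module K N] {I : Ideal (MvPolynomial (Fin n) K)} {e : (Fin n → ℕ) → (I →ₗ[K] N)}
    (he : ∀ a b, ∀ m ∈ idealPiece I (rmap t a),
      e (a + b) (mono K (rmap t (a + b) - rmap t a) • m) = mono K b • e a m)
    {a : Fin n → ℕ} (b : Fin n → ℕ) (h : mono K (rmap t a) ∈ I) :
    monomialImage I (e (a + b)) (rmap t (a + b)) =
      mono K b • monomialImage I (e a) (rmap t a) := by
  have h' : mono K (rmap t (a + b)) ∈ I := by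
    rw [mono_rmap_add a b]
    exact I.mul_mem_left _ h
  rw [monomialImage, dif_pos h', monomialImage, dif_pos h, ← he a b _ (by
    rw [idealPiece_eq_span_singleton I h]; exact Submodule.mem_span_singleton_self _)]
  exact congrArg (e (a + b)) (Subtype.ext (mono_rmap_add a b))

end Rmap

theorem rstar_ideal_iso_radical_general {N : Type}
    [AddCommGroup N] [Module (MvPolynomial (Fin n) K) N] [Module K N]
    [IsScalarTower K (MvPolynomial (Fin n) K) N]
    (t : Fin n → ℕ)
    (I : Ideal (MvPolynomial (Fin n) K)) (A : Set (Fin n → ℕ)) (hA : ∀ b ∈ A, b ≤ t)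
    (hI : I = Ideal.span ((fun b => mono K b) '' A))
    (G : MultiGrading K n ↥I) (hG : ∀ a : Fin n → ℕ, G.g a = idealPiece I a)
    (H : MultiGrading K n N) (hN : IsRStar t G H) :
    ∃ e : N ≃ₗ[MvPolynomial (Fin n) K] ↥(I.radical),
      ∀ a : Fin n → ℕ,
        Submodule.map (e.toLinearMap.restrictScalars K) (H.g a) =
          idealPiece I.radical a := by
  obtain ⟨e, he_inj, he_img, he_mul⟩ := hN
  have hrmap : ∀ a, mono K (rmap t a) ∈ I ↔ mono K a ∈ I.radical := by
    subst hI
    exact mono_rmap_mem_iff hA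
  have hHg : ∀ a, H.g a = (idealPiece I (rmap t a)).map (e a) := fun a =>
    SetLike.coe_injective (by rw [Submodule.map_coe, ← hG, he_img])
  have hrad : IsMonomialIdeal I.radical := by
    subst hI
    exact isMonomialIdeal_radical_span_mono A
  refine exists_linearEquiv_idealPiece hrad H.internal
    (v := fun a => monomialImage I (e a) (rmap t a)) (fun a => ?_) (fun a => ?_) (fun a b ha => ?_)
  · rw [hHg, map_idealPiece]
  · rw [monomialImage_eq_zero_iff I (hG _ ▸ he_inj a), hrmap]
  · exact monomialImage_rmap_add (fun a b m hm => he_mul a b m (hG _ ▸ hm)) b ((hrmap a).2 ha)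

/-- for a positively `t`-determined monomial ideal `I`, the map `x^a ↦ x^{r(a)}`
gives an isomorphism of `ℤ^n`-graded `S`-modules `r^*I ≅ √I`. Here `G` is the natural grading
of the module `↥I`, `(N, H)` realizes `r^*I`, and the conclusion is a graded isomorphism with
`√I`, carrying its natural grading. -/
theorem rstar_ideal_iso_radical {N : Type}
    [AddCommGroup N] [Module (MvPolynomial (Fin n) K) N] [Module K N]
    [IsScalarTower K (MvPolynomial (Fin n) K) N]
    (t : Fin n → ℕ) (ht : ∀ i, 1 ≤ t i)
    (I : Ideal (MvPolynomial (Fin n) K)) (A : Set (Fin n → ℕ)) (hA : ∀ b ∈ A, b ≤ t)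
    (hI : I = Ideal.span ((fun b => mono K b) '' A))
    (G : MultiGrading K n ↥I) (hG : ∀ a : Fin n → ℕ, G.g a = idealPiece I a)
    (H : MultiGrading K n N) (hN : IsRStar t G H) :
    ∃ e : N ≃ₗ[MvPolynomial (Fin n) K] ↥(I.radical),
      ∀ a : Fin n → ℕ,
        Submodule.map (e.toLinearMap.restrictScalars K) (H.g a) =
          idealPiece I.radical a :=
  rstar_ideal_iso_radical_general t I A hA hI G hG H hN
end
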